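/- Let X ⊆ V_{1,d} ⊆ P^d be a finite set of s reduced points on the rational normal curve of degree d. Then H_X(t) = dt + 1 for all t ≤ ⌊(s−2)/d⌋, and H_X(t) = s for all t ≥ ⌊(s−2)/d⌋ + 1. -/

import Mathlib

open MvPolynomial

noncomputable section

namespace VeroneseCI

variable (K : Type) [Field K]

/-- Evaluation of the monomial with exponent vector `m` at the point `v` of the affine cone. -/
def monEval {n : ℕ} (v : Fin (n + 1) → K) (m : Fin (n + 1) →₀ ℕ) : K :=
  m.prod fun j k => v j ^ k

/-- The Veronese coordinates of a vector `v`, indexed by `ι` via the enumeration `e` of the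
degree-`d` exponent vectors. -/
def vCoords (n d : ℕ) {ι : Type} (e : ι ≃ {m : Fin (n + 1) →₀ ℕ // m.degree = d})
    (v : Fin (n + 1) → K) : ι → K :=
  fun i => monEval K v (e i).1

/-- The Veronese embedding `ν_{n,d} : ℙⁿ → ℙᴺ` (with the coordinates of the target indexed by
`ι` via the enumeration `e` of the degree-`d` monomials). -/
def veroneseMap (n d : ℕ) {ι : Type} [Nonempty ι]
    (e : ι ≃ {m : Fin (n + 1) →₀ ℕ // m.degree = d})
    (x : Projectivization K (Fin (n + 1) → K)) : Projectivization K (ι → K) :=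
  letI := Classical.propDecidable (vCoords K n d e x.rep ≠ 0)
  if h : vCoords K n d e x.rep ≠ 0 then Projectivization.mk K (vCoords K n d e x.rep) h
  else Projectivization.mk K (fun _ => 1)
    (fun hc => one_ne_zero (congrFun hc (Classical.arbitrary ι)))

/-- The Veronese variety `V_{n,d}`, i.e. the image of the Veronese embedding. -/
def veroneseVariety (n d : ℕ) {ι : Type} [Nonempty ι]
    (e : ι ≃ {m : Fin (n + 1) →₀ ℕ // m.degree = d}) : Set (Projectivization K (ι → K)) :=
  Set.range (veroneseMap K n d e)

/-- The graded `K`-algebra morphism `φ_d : S → R` sending `y_i` to the `i`-th degree-`d`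
monomial. -/
def phi (n d : ℕ) {ι : Type} (e : ι ≃ {m : Fin (n + 1) →₀ ℕ // m.degree = d}) :
    MvPolynomial ι K →ₐ[K] MvPolynomial (Fin (n + 1)) K :=
  MvPolynomial.aeval fun i => MvPolynomial.monomial (e i).1 (1 : K)

variable {σ : Type}

/-- The homogeneous vanishing ideal of a set of points of projective space. -/
def pvi (W : Set (Projectivization K (σ → K))) : Ideal (MvPolynomial σ K) :=
  ⨅ (v : {w : σ → K // w ≠ 0}) (_ : Projectivization.mk K v.1 v.2 ∈ W),
    RingHom.ker (MvPolynomial.eval v.1)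

/-- The zero locus in projective space of an ideal of the polynomial ring. -/
def pzl (I : Ideal (MvPolynomial σ K)) : Set (Projectivization K (σ → K)) :=
  {x | ∀ f ∈ I, ∀ v : {w : σ → K // w ≠ 0}, Projectivization.mk K v.1 v.2 = x →
    MvPolynomial.eval v.1 f = 0}

/-- A set of points of projective space is a (reduced) closed subvariety if it is the zero locus
of its homogeneous vanishing ideal. -/
def IsClosedSubvariety (W : Set (Projectivization K (σ → K))) : Prop :=
  W = pzl K (pvi K W)

/-- The Hilbert function of a subset `W` of projective space: the `K`-dimension of the degree-`t`
part of the homogeneous coordinate ring of `W`. -/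
def hilb (W : Set (Projectivization K (σ → K))) (t : ℕ) : ℕ :=
  Module.finrank K ((homogeneousSubmodule σ K t) ⧸
    ((Submodule.restrictScalars K (pvi K W)).comap (homogeneousSubmodule σ K t).subtype))

/-- `W` is a complete intersection of type `(a 0, …, a (r-1))` if it is a closed subvariety whose
homogeneous vanishing ideal is generated by homogeneous forms of degrees `a 0, …, a (r-1)` and
whose codimension is `r`. -/
def IsCIofType [Fintype σ] (W : Set (Projectivization K (σ → K))) {r : ℕ} (a : Fin r → ℕ) :
    Prop :=
  IsClosedSubvariety K W ∧
  (∃ f : Fin r → MvPolynomial σ K, (∀ i, (f i).IsHomogeneous (a i)) ∧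
      pvi K W = Ideal.span (Set.range f)) ∧
  ringKrullDim (MvPolynomial σ K ⧸ pvi K W) + (r : WithBot ℕ∞) =
    (Fintype.card σ : WithBot ℕ∞)

/-- A conic: a complete intersection of type `(1,…,1,2)` of codimension `card σ - 2`
(i.e. a plane curve of degree `2`). -/
def IsConic [Fintype σ] (C : Set (Projectivization K (σ → K))) : Prop :=
  IsCIofType K C (fun i : Fin (Fintype.card σ - 2) =>
    if (i : ℕ) < Fintype.card σ - 3 then 1 else 2)

/-- `macaulayBound t c = c^⟨t⟩`, computed greedily from the `t`-binomial expansion of `c`. -/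
def macaulayBound : ℕ → ℕ → ℕ
  | 0, _ => 0
  | _ + 1, 0 => 0
  | t + 1, c + 1 =>
    let m := Nat.findGreatest (fun m => Nat.choose m (t + 1) ≤ c + 1) (c + t + 2)
    Nat.choose (m + 1) (t + 2) + macaulayBound t (c + 1 - Nat.choose m (t + 1))

/-- A 0-sequence: `c 0 = 1` and `c (t+1) ≤ (c t)^⟨t⟩` for all `t ≥ 1`. -/
def IsZeroSequence (c : ℕ → ℕ) : Prop :=
  c 0 = 1 ∧ ∀ t : ℕ, 1 ≤ t → c (t + 1) ≤ macaulayBound t (c t)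

/-- The first difference sequence of `b` (with `b (-1) = 0`). -/
def deltaSeq (b : ℕ → ℕ) : ℕ → ℕ
  | 0 => b 0
  | t + 1 => b (t + 1) - b t

/-- A differentiable 0-sequence: a 0-sequence whose first difference sequence is again a
0-sequence. -/
def IsDiffZeroSequence (b : ℕ → ℕ) : Prop :=
  IsZeroSequence b ∧ Monotone b ∧ IsZeroSequence (deltaSeq b)

/-- An `e`-sequence: a 0-sequence `b` for which there is a 0-sequence `c` with
`b t = c ((e+1) * t)`. -/
def IsESequence (e : ℕ) (b : ℕ → ℕ) : Prop :=
  IsZeroSequence b ∧ ∃ c : ℕ → ℕ, IsZeroSequence c ∧ ∀ t, b t = c ((e + 1) * t)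

/-- A differentiable `e`-sequence: a 0-sequence `b` for which there is a differentiable
0-sequence `c` with `b t = c ((e+1) * t)`. -/
def IsDiffESequence (e : ℕ) (b : ℕ → ℕ) : Prop :=
  IsZeroSequence b ∧ ∃ c : ℕ → ℕ, IsDiffZeroSequence c ∧ ∀ t, b t = c ((e + 1) * t)

/-- The function `μ₂(d,t,s)` of the paper. -/
def mu2 (d t s : ℕ) : ℕ :=
  let m1 := d ^ 2 * t + d * (d + 3) / 2 - s
  if m1 ≤ (d + 1).choose 2 then
    (⌊((2 * d * (t + 1) + 3 : ℝ) - Real.sqrt (1 + 8 * m1)) / 2⌋).toNat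
  else
    d * t - (m1 - (d + 1).choose 2 - 1) / d

/-- A (commutative, Noetherian) ring is Gorenstein if it has finite injective dimension as a
module over itself, i.e. there is `n` such that `Ext^i (M, A) = 0` for all modules `M` and all
`i > n`. -/
def IsGorensteinRing (A : Type) [CommRing A] : Prop :=
  IsNoetherianRing A ∧ ∃ n : ℕ, ∀ (M : ModuleCat.{0} A) (i : ℕ), n < i →
    CategoryTheory.Limits.IsZero (((Ext A (ModuleCat.{0} A) i).obj (Opposite.op M)).obj
      (ModuleCat.of A A))


section Aux
variable {K}

lemma degree_fin2 (m : Fin 2 →₀ ℕ) : m.degree = m 0 + m 1 := by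
  rw [show m.degree = m.sum (fun _ k => k) from rfl,
    Finsupp.sum_fintype _ _ (fun _ => rfl), Fin.sum_univ_two]

lemma monEval_fin2 (v : Fin 2 → K) (m : Fin 2 →₀ ℕ) :
    monEval K v m = v 0 ^ m 0 * v 1 ^ m 1 := by
  rw [monEval, Finsupp.prod_fintype _ _ (fun i => pow_zero _), Fin.prod_univ_two]

lemma monEval_smul (c : K) (v : Fin 2 → K) (m : Fin 2 →₀ ℕ) :
    monEval K (c • v) m = c ^ m.degree * monEval K v m := by
  simp only [monEval_fin2, degree_fin2, Pi.smul_apply, smul_eq_mul, mul_pow, pow_add]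
  ring

lemma vCoords_smul (d : ℕ) {ι : Type} (e : ι ≃ {m : Fin 2 →₀ ℕ // m.degree = d})
    (c : K) (v : Fin 2 → K) :
    vCoords K 1 d e (c • v) = c ^ d • vCoords K 1 d e v := by
  funext i
  simp only [vCoords, monEval_smul, (e i).2, Pi.smul_apply, smul_eq_mul]

lemma vCoords_ne_zero (d : ℕ) {ι : Type} (e : ι ≃ {m : Fin 2 →₀ ℕ // m.degree = d})
    {v : Fin 2 → K} (hv : v ≠ 0) : vCoords K 1 d e v ≠ 0 := by
  obtain ⟨i, hi⟩ : ∃ i, v i ≠ 0 := by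
    by_contra h; push_neg at h; exact hv (funext h)
  have hdeg : (Finsupp.single i d).degree = d := by
    rw [degree_fin2]; fin_cases i <;> simp [Finsupp.single_apply]
  intro h
  have h2 := congrFun h (e.symm ⟨Finsupp.single i d, hdeg⟩)
  rw [vCoords] at h2
  simp only [Equiv.apply_symm_apply, Pi.zero_apply] at h2
  rw [monEval_fin2] at h2
  fin_cases i <;> simp [Finsupp.single_apply] at h2 hi <;>
    exact pow_ne_zero d hi (by simpa using h2)

lemma sum_min_eq (d : ℕ) : ∀ (t j : ℕ), j ≤ d * t →
    ∑ k ∈ Finset.range t, min d (j - d * k) = j := by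
  intro t
  induction t with
  | zero => intro j hj; simp at hj ⊢; omega
  | succ t ih =>
    intro j hj
    rw [Finset.sum_range_succ']
    rw [Nat.mul_succ] at hj
    rcases le_or_gt j d with h | h
    · have h0 : min d (j - d * 0) = j := by
        rw [Nat.mul_zero, Nat.sub_zero]; omega
      have hz : ∀ k ∈ Finset.range t, min d (j - d * (k + 1)) = 0 := by
        intro k _
        have hdk : d ≤ d * (k + 1) := Nat.le_mul_of_pos_right d k.succ_pos
        omega
      rw [Finset.sum_congr rfl hz, h0, Finset.sum_const, smul_eq_mul, mul_zero, zero_add]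
    · have h0 : min d (j - d * 0) = d := by
        rw [Nat.mul_zero, Nat.sub_zero]; omega
      have hre : ∀ k ∈ Finset.range t, min d (j - d * (k + 1)) = min d ((j - d) - d * k) := by
        intro k _; congr 1; rw [Nat.mul_succ]; omega
      rw [Finset.sum_congr rfl hre, h0, ih (j - d) (by omega)]
      omega

lemma eval_smul_of_isHomogeneous {σ : Type} [Fintype σ] {f : MvPolynomial σ K} {t : ℕ}
    (hf : f.IsHomogeneous t) (c : K) (v : σ → K) :
    MvPolynomial.eval (c • v) f = c ^ t * MvPolynomial.eval v f := by
  rw [eval_eq', eval_eq', Finset.mul_sum]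
  refine Finset.sum_congr rfl fun m hm => ?_
  have hdeg : m.degree = t := by
    by_contra hne
    exact mem_support_iff.mp hm (hf.coeff_eq_zero hne)
  have hdeg2 : ∑ i, m i = t := by
    rw [← hdeg, show m.degree = m.sum (fun _ k => k) from rfl,
      Finsupp.sum_fintype _ _ (fun _ => rfl)]
  calc f.coeff m * ∏ i, (c • v) i ^ m i
      = f.coeff m * ((∏ i, c ^ m i) * ∏ i, v i ^ m i) := by
        rw [← Finset.prod_mul_distrib]
        simp [mul_pow]
    _ = c ^ t * (f.coeff m * ∏ i, v i ^ m i) := by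
        rw [Finset.prod_pow_eq_pow_sum, hdeg2]; ring

lemma natDegree_lt_of_degree_lt {p : Polynomial K} {n : ℕ} (hn : 0 < n)
    (h : p.degree < n) : p.natDegree < n := by
  by_cases hp : p = 0
  · simp [hp, hn]
  · exact (Polynomial.natDegree_lt_iff_degree_lt hp).mpr h

end Aux

theorem statement6 (d : ℕ) (hd : 0 < d)
    (K : Type) [Field K] [IsAlgClosed K] [CharZero K]
    (e : Fin (d + 1) ≃ {m : Fin 2 →₀ ℕ // m.degree = d})
    (X : Set (Projectivization K (Fin (d + 1) → K)))
    (hXV : X ⊆ veroneseVariety K 1 d e) (hfin : X.Finite)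
    (s : ℕ) (hs : X.ncard = s) (hs1 : 1 ≤ s) :
    ∀ t : ℕ, ((t : ℤ) ≤ Int.fdiv ((s : ℤ) - 2) d → hilb K X t = d * t + 1) ∧
      (Int.fdiv ((s : ℤ) - 2) d + 1 ≤ (t : ℤ) → hilb K X t = s) := by
  classical
  haveI : Fintype ↥X := hfin.fintype
  have hcard : Fintype.card ↥X = s := by
    rw [← Nat.card_eq_fintype_card, Nat.card_coe_set_eq, hs]
  -- choose nice representatives
  have hrep : ∀ x : ↥X, ∃ wv : Fin 2 → K,
      (wv 1 = 1 ∨ (wv 0 = 1 ∧ wv 1 = 0)) ∧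
      ∃ h : vCoords K 1 d e wv ≠ 0,
        Projectivization.mk K (vCoords K 1 d e wv) h
          = (x : Projectivization K (Fin (d + 1) → K)) := by
    intro x
    obtain ⟨p, hp⟩ := hXV x.2
    have hv0 : p.rep ≠ 0 := p.rep_nonzero
    have hvC : vCoords K 1 d e p.rep ≠ 0 := vCoords_ne_zero d e hv0
    have hx : Projectivization.mk K (vCoords K 1 d e p.rep) hvC
        = (x : Projectivization K (Fin (d + 1) → K)) := by
      rw [← hp]; rw [veroneseMap, dif_pos hvC]
    rcases eq_or_ne (p.rep 1) 0 with h1 | h1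
    · have h0 : p.rep 0 ≠ 0 := by
        intro h0
        apply hv0; funext i; fin_cases i <;> simpa [h0, h1]
      set c := (p.rep 0)⁻¹ with hc
      have hcne : c ≠ 0 := inv_ne_zero h0
      refine ⟨c • p.rep, Or.inr ⟨by simp [hc, inv_mul_cancel₀ h0],
        by simp [h1]⟩, vCoords_ne_zero d e (fun hh => hcne (by
          have := congrFun hh 0
          simp [inv_mul_cancel₀ h0] at this; exact this.resolve_right h0)), ?_⟩
      rw [← hx]
      apply (Projectivization.mk_eq_mk_iff K _ _ _ _).mpr
      refine ⟨Units.mk0 (c ^ d) (pow_ne_zero _ hcne), ?_⟩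
      rw [Units.smul_def, Units.val_mk0]
      exact (vCoords_smul d e c p.rep).symm
    · set c := (p.rep 1)⁻¹ with hc
      have hcne : c ≠ 0 := inv_ne_zero h1
      refine ⟨c • p.rep, Or.inl (by simp [hc, inv_mul_cancel₀ h1]),
        vCoords_ne_zero d e (fun hh => hcne (by
          have := congrFun hh 1
          simp [inv_mul_cancel₀ h1] at this; exact this.resolve_right h1)), ?_⟩
      rw [← hx]
      apply (Projectivization.mk_eq_mk_iff K _ _ _ _).mpr
      refine ⟨Units.mk0 (c ^ d) (pow_ne_zero _ hcne), ?_⟩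
      rw [Units.smul_def, Units.val_mk0]
      exact (vCoords_smul d e c p.rep).symm
  choose w hw hne hmk using hrep
  set u : ↥X → (Fin (d + 1) → K) := fun x => vCoords K 1 d e (w x) with hu
  have hwinj : ∀ x y : ↥X, w x = w y → x = y := by
    intro x y hxy
    apply Subtype.ext
    rw [← hmk x, ← hmk y]
    apply (Projectivization.mk_eq_mk_iff K _ _ _ _).mpr
    exact ⟨1, by simp [hxy]⟩
  have hfin_inj : ∀ x y : ↥X, w x 1 = 1 → w y 1 = 1 → w x 0 = w y 0 → x = y := by
    intro x y h1 h2 h3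
    apply hwinj; funext i; fin_cases i
    · exact h3
    · show w x 1 = w y 1; rw [h1, h2]
  have hinf_uniq : ∀ x y : ↥X, w x 1 = 0 → w y 1 = 0 → x = y := by
    intro x y h1 h2
    rcases hw x with h | ⟨hx0, _⟩
    · rw [h] at h1; exact absurd h1 one_ne_zero
    rcases hw y with h | ⟨hy0, _⟩
    · rw [h] at h2; exact absurd h2 one_ne_zero
    apply hwinj; funext i; fin_cases i
    · show w x 0 = w y 0; rw [hx0, hy0]
    · show w x 1 = w y 1; rw [h1, h2]
  intro t
  set N := d * t with hN
  clear_value N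
  -- the evaluation map E on degree-t forms
  let E : (homogeneousSubmodule (Fin (d + 1)) K t) →ₗ[K] (↥X → K) :=
    { toFun := fun f x => MvPolynomial.eval (u x) f.1
      map_add' := by intro f g; funext x; simp
      map_smul' := by intro c f; funext x; simp [MvPolynomial.smul_eval] }
  have hE : ∀ (f : homogeneousSubmodule (Fin (d + 1)) K t) (x : ↥X),
      E f x = MvPolynomial.eval (u x) f.1 := fun _ _ => rfl
  have hker : ∀ f : homogeneousSubmodule (Fin (d + 1)) K t,
      (f.1 ∈ pvi K X ↔ ∀ x : ↥X, MvPolynomial.eval (u x) f.1 = 0) := by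
    intro f
    constructor
    · intro hf x
      have h1 := (Submodule.mem_iInf _).mp hf ⟨u x, hne x⟩
      have h2 := (Submodule.mem_iInf _).mp h1 (by rw [hmk x]; exact x.2)
      exact RingHom.mem_ker.mp h2
    · intro hf
      rw [pvi]
      refine (Submodule.mem_iInf _).mpr fun v => (Submodule.mem_iInf _).mpr fun hv =>
        RingHom.mem_ker.mpr ?_
      set x : ↥X := ⟨Projectivization.mk K v.1 v.2, hv⟩ with hx
      have heq : Projectivization.mk K v.1 v.2 = Projectivization.mk K (u x) (hne x) := by
        rw [hmk x]
      obtain ⟨c, hc⟩ := (Projectivization.mk_eq_mk_iff K _ _ v.2 (hne x)).mp heq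
      have : MvPolynomial.eval v.1 f.1 = (c : K) ^ t * MvPolynomial.eval (u x) f.1 := by
        rw [← hc, Units.smul_def]
        exact eval_smul_of_isHomogeneous f.2 _ _
      rw [this, hf x, mul_zero]
  have hcomap : (Submodule.restrictScalars K (pvi K X)).comap
      (homogeneousSubmodule (Fin (d + 1)) K t).subtype = LinearMap.ker E := by
    ext f
    simp only [Submodule.mem_comap, Submodule.restrictScalars_mem, Submodule.coe_subtype,
      LinearMap.mem_ker]
    rw [hker f]
    constructor
    · intro h; funext x; rw [hE]; exact h x
    · intro h x; rw [← hE]; rw [h]; rfl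
  have hq : hilb K X t = Module.finrank K (LinearMap.range E) := by
    rw [hilb, hcomap]
    exact LinearEquiv.finrank_eq (LinearMap.quotKerEquivRange E)
  -- the map Φ on coefficient vectors
  let Φ : (Fin (N + 1) → K) →ₗ[K] (↥X → K) :=
    { toFun := fun c x => ∑ j : Fin (N + 1), c j * w x 0 ^ (j : ℕ) * w x 1 ^ (N - (j : ℕ))
      map_add' := by
        intro c c'; funext x
        rw [Pi.add_apply, ← Finset.sum_add_distrib]
        refine Finset.sum_congr rfl fun j _ => by rw [Pi.add_apply]; ring
      map_smul' := by
        intro a c; funext x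
        rw [RingHom.id_apply, Pi.smul_apply, smul_eq_mul, Finset.mul_sum]
        refine Finset.sum_congr rfl fun j _ => by rw [Pi.smul_apply, smul_eq_mul]; ring }
  have hΦ : ∀ (c : Fin (N + 1) → K) (x : ↥X),
      Φ c x = ∑ j : Fin (N + 1), c j * w x 0 ^ (j : ℕ) * w x 1 ^ (N - (j : ℕ)) :=
    fun _ _ => rfl
  have hΦsingle : ∀ (j : Fin (N + 1)) (x : ↥X),
      Φ (Pi.single j 1) x = w x 0 ^ (j : ℕ) * w x 1 ^ (N - (j : ℕ)) := by
    intro j x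
    rw [hΦ, Finset.sum_eq_single j]
    · rw [Pi.single_eq_same, one_mul]
    · intro k _ hk; rw [Pi.single_eq_of_ne hk, zero_mul, zero_mul]
    · intro h; exact absurd (Finset.mem_univ j) h
  have hΦinf : ∀ (c : Fin (N + 1) → K) (x : ↥X), w x 0 = 1 → w x 1 = 0 →
      Φ c x = c (Fin.last N) := by
    intro c x h0 h1
    rw [hΦ, Finset.sum_eq_single (Fin.last N)]
    · rw [h0, h1, one_pow, mul_one, Fin.val_last, Nat.sub_self, pow_zero, mul_one]
    · intro k _ hk
      rw [h1, zero_pow (by have := Fin.val_lt_last hk; omega), mul_zero]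
    · intro h; exact absurd (Finset.mem_univ _) h
  have hΦfin : ∀ (p : Polynomial K) (x : ↥X), w x 1 = 1 → p.natDegree < N + 1 →
      Φ (fun j => p.coeff (j : ℕ)) x = p.eval (w x 0) := by
    intro p x hb hdeg
    rw [hΦ, Polynomial.eval_eq_sum_range' hdeg,
      ← Fin.sum_univ_eq_sum_range (fun j => p.coeff j * w x 0 ^ j) (N + 1)]
    refine Finset.sum_congr rfl fun j _ => by rw [hb, one_pow, mul_one]
  -- range E = range Φ
  have hprod : ∀ (vv : Fin 2 → K) (m : Fin (d + 1) →₀ ℕ),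
      ∏ i, (vCoords K 1 d e vv i) ^ m i
        = vv 0 ^ (∑ i, m i * ((e i).1 0)) * vv 1 ^ (∑ i, m i * ((e i).1 1)) := by
    intro vv m
    rw [← Finset.prod_pow_eq_pow_sum, ← Finset.prod_pow_eq_pow_sum, ← Finset.prod_mul_distrib]
    refine Finset.prod_congr rfl fun i _ => ?_
    rw [vCoords, monEval_fin2, mul_pow, ← pow_mul, ← pow_mul,
      mul_comm ((e i).1 0) (m i), mul_comm ((e i).1 1) (m i)]
  have hAB : ∀ f : homogeneousSubmodule (Fin (d + 1)) K t, ∀ m ∈ f.1.support,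
      (∑ i, m i * ((e i).1 0)) + (∑ i, m i * ((e i).1 1)) = N := by
    intro f m hm
    have hfh : f.1.IsHomogeneous t := f.2
    have hdeg : m.degree = t := by
      by_contra hne'
      exact MvPolynomial.mem_support_iff.mp hm (hfh.coeff_eq_zero hne')
    rw [← Finset.sum_add_distrib]
    have h1 : ∀ i, m i * ((e i).1 0) + m i * ((e i).1 1) = m i * d := by
      intro i; rw [← Nat.mul_add]
      congr 1
      rw [← degree_fin2]; exact (e i).2
    rw [Finset.sum_congr rfl (fun i _ => h1 i), ← Finset.sum_mul]
    have h2 : ∑ i, m i = t := by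
      rw [← hdeg, show m.degree = m.sum (fun _ k => k) from rfl,
        Finsupp.sum_fintype _ _ (fun _ => rfl)]
    rw [h2, hN]
    exact Nat.mul_comm t d
  have hEΦ : ∀ f : homogeneousSubmodule (Fin (d + 1)) K t, E f ∈ LinearMap.range Φ := by
    intro f
    have hsum : E f = ∑ m ∈ f.1.support, MvPolynomial.coeff m f.1 •
        Φ (Pi.single ⟨min (∑ i, m i * ((e i).1 0)) N, Nat.lt_succ_of_le (min_le_right _ _)⟩ 1) := by
      funext x
      rw [Finset.sum_apply, hE, MvPolynomial.eval_eq' (u x) f.1]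
      refine Finset.sum_congr rfl fun m hm => ?_
      have hABm := hAB f m hm
      have hAle : (∑ i, m i * ((e i).1 0)) ≤ N := by omega
      rw [Pi.smul_apply, smul_eq_mul, hΦsingle]
      show f.1.coeff m * ∏ i, (vCoords K 1 d e (w x) i) ^ m i = _
      rw [hprod (w x) m]
      have hval : ((⟨min (∑ i, m i * ((e i).1 0)) N,
          Nat.lt_succ_of_le (min_le_right _ _)⟩ : Fin (N + 1)) : ℕ)
          = (∑ i, m i * ((e i).1 0)) := min_eq_left hAle
      rw [hval, show N - (∑ i, m i * ((e i).1 0)) = (∑ i, m i * ((e i).1 1)) by omega]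
    rw [hsum]
    exact Submodule.sum_mem _ fun m _ => Submodule.smul_mem _ _ ⟨_, rfl⟩
  have hΦE : ∀ j : Fin (N + 1), Φ (Pi.single j 1) ∈ LinearMap.range E := by
    intro j
    set q : ℕ → ℕ := fun k => min d ((j : ℕ) - d * k) with hqdef
    have hqle : ∀ k, q k ≤ d := fun k => min_le_left _ _
    have hqsum : ∑ k ∈ Finset.range t, q k = (j : ℕ) :=
      sum_min_eq d t j (by have := j.2; omega)
    have hmdeg : ∀ k, (Finsupp.single (0 : Fin 2) (q k)
        + Finsupp.single (1 : Fin 2) (d - q k)).degree = d := by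
      intro k
      have hk := hqle k
      rw [degree_fin2]
      simp only [Finsupp.add_apply, Finsupp.single_apply]
      norm_num
      omega
    have hfh : (∏ k ∈ Finset.range t,
        (MvPolynomial.X (e.symm ⟨_, hmdeg k⟩) : MvPolynomial (Fin (d + 1)) K)).IsHomogeneous t := by
      have := MvPolynomial.IsHomogeneous.prod (Finset.range t)
        (fun k => (MvPolynomial.X (e.symm ⟨_, hmdeg k⟩) : MvPolynomial (Fin (d + 1)) K))
        (fun _ => 1) (fun k _ => MvPolynomial.isHomogeneous_X _ _)
      simpa using this
    refine ⟨⟨_, hfh⟩, ?_⟩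
    funext x
    rw [hE, hΦsingle]
    rw [map_prod]
    have hev : ∀ k ∈ Finset.range t,
        MvPolynomial.eval (u x) (MvPolynomial.X (e.symm ⟨_, hmdeg k⟩) : MvPolynomial (Fin (d + 1)) K)
          = w x 0 ^ q k * w x 1 ^ (d - q k) := by
      intro k _
      rw [MvPolynomial.eval_X]
      show vCoords K 1 d e (w x) _ = _
      rw [vCoords, Equiv.apply_symm_apply, monEval_fin2]
      simp only [Finsupp.add_apply, Finsupp.single_apply]
      norm_num
    rw [Finset.prod_congr rfl hev, Finset.prod_mul_distrib,
      Finset.prod_pow_eq_pow_sum, Finset.prod_pow_eq_pow_sum, hqsum]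
    congr 1
    rw [Finset.sum_tsub_distrib _ (fun k _ => hqle k), Finset.sum_const, Finset.card_range,
      smul_eq_mul, hqsum]
    have htd : t * d = N := by rw [hN, Nat.mul_comm d t]
    exact congrArg (fun z => w x 1 ^ (z - (j : ℕ))) htd
  have hrange : LinearMap.range E = LinearMap.range Φ := by
    apply le_antisymm
    · rintro _ ⟨f, rfl⟩; exact hEΦ f
    · rintro _ ⟨c, rfl⟩
      have hc : Φ c = ∑ j : Fin (N + 1), c j • Φ (Pi.single j 1) := by
        have h1 : c = ∑ j : Fin (N + 1), Pi.single j (c j) := (Finset.univ_sum_single c).symm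
        conv_lhs => rw [h1]
        rw [map_sum]
        refine Finset.sum_congr rfl fun j _ => ?_
        have : Pi.single j (c j) = c j • (Pi.single j 1 : Fin (N + 1) → K) := by
          funext k
          rcases eq_or_ne k j with rfl | hk
          · simp
          · simp [Pi.single_eq_of_ne hk]
        rw [this, map_smul]
      rw [hc]
      exact Submodule.sum_mem _ fun j _ => Submodule.smul_mem _ _ (hΦE j)
  -- injectivity
  have hinj : N + 1 ≤ s → Function.Injective Φ := by
    intro hs'
    have hbot : LinearMap.ker Φ = ⊥ := by
      rw [Submodule.eq_bot_iff]
      intro c hc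
      rw [LinearMap.mem_ker] at hc
      set p : Polynomial K := ∑ j : Fin (N + 1), Polynomial.monomial (j : ℕ) (c j) with hp
      have hco : ∀ j : Fin (N + 1), p.coeff (j : ℕ) = c j := by
        intro j
        rw [hp, Polynomial.finset_sum_coeff, Finset.sum_eq_single j]
        · rw [Polynomial.coeff_monomial, if_pos rfl]
        · intro k _ hk
          rw [Polynomial.coeff_monomial, if_neg (fun h => hk (Fin.ext h))]
        · intro h; exact absurd (Finset.mem_univ _) h
      have hcp : c = fun j : Fin (N + 1) => p.coeff j.1 := funext fun j => (hco j).symm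
      have hdeg : p.natDegree ≤ N := by
        rw [hp]
        refine Polynomial.natDegree_le_iff_coeff_eq_zero.mpr fun M hM => ?_
        rw [Polynomial.finset_sum_coeff]
        refine Finset.sum_eq_zero fun k _ => ?_
        rw [Polynomial.coeff_monomial, if_neg (by have := k.2; omega)]
      by_cases hpz : p = 0
      · funext j; rw [← hco j, hpz]; simp
      · exfalso
        set F : Finset ↥X := Finset.univ.filter (fun x => w x 1 = 1) with hF
        set T : Finset K := F.image (fun x => w x 0) with hT
        have hTcard : T.card = F.card := by
          rw [hT]
          apply Finset.card_image_of_injOn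
          intro x hx y hy hxy
          exact hfin_inj x y (by simpa [hF] using hx) (by simpa [hF] using hy) hxy
        have hroots : T.card ≤ p.natDegree := by
          apply Polynomial.card_le_degree_of_subset_roots
          intro z hz
          obtain ⟨x, hx, rfl⟩ := Finset.mem_image.mp hz
          have hbx : w x 1 = 1 := by simpa [hF] using hx
          refine Polynomial.mem_roots'.mpr ⟨hpz, ?_⟩
          have := congrFun hc x
          rw [hcp, hΦfin p x hbx (by omega), Pi.zero_apply] at this
          exact this
        by_cases hall : ∀ x : ↥X, w x 1 = 1
        · have hFu : F = Finset.univ := by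
            ext y; simp [hF, hall y]
          rw [hFu, Finset.card_univ, hcard] at hTcard
          omega
        · push_neg at hall
          obtain ⟨xinf, hxinf⟩ := hall
          obtain ⟨h0, h1⟩ : w xinf 0 = 1 ∧ w xinf 1 = 0 := (hw xinf).resolve_left hxinf
          have hclast : c (Fin.last N) = 0 := by
            have := congrFun hc xinf
            rw [hΦinf c xinf h0 h1, Pi.zero_apply] at this
            exact this
          have hcoN : p.coeff N = 0 := by
            have := hco (Fin.last N)
            rw [Fin.val_last] at this
            rw [this, hclast]
          have hdlt : p.natDegree < N := by
            rcases lt_or_eq_of_le hdeg with h | h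
            · exact h
            · exfalso
              have := Polynomial.leadingCoeff_ne_zero.mpr hpz
              rw [Polynomial.leadingCoeff, h, hcoN] at this
              exact this rfl
          have hFe : F = Finset.univ.erase xinf := by
            ext y
            simp only [hF, Finset.mem_filter, Finset.mem_univ, true_and, Finset.mem_erase,
              and_true]
            constructor
            · intro hy he
              rw [he, h1] at hy
              exact one_ne_zero hy.symm
            · intro hy
              rcases hw y with h | ⟨hy0, hy1⟩
              · exact h
              · exact absurd (hinf_uniq y xinf hy1 h1) hy
          have : F.card = s - 1 := by
            rw [hFe, Finset.card_erase_of_mem (Finset.mem_univ _), Finset.card_univ, hcard]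
          omega
    exact LinearMap.ker_eq_bot.mp hbot
  -- surjectivity
  have hsurj : s ≤ N + 1 → Function.Surjective Φ := by
    intro hs' g
    set F : Finset ↥X := Finset.univ.filter (fun x => w x 1 = 1) with hF
    have hinjOn : Set.InjOn (fun x : ↥X => w x 0) F := by
      intro x hx y hy hxy
      exact hfin_inj x y (by simpa [hF] using hx) (by simpa [hF] using hy) hxy
    set qq := Lagrange.interpolate F (fun x => w x 0) g with hqq
    have hqdeg : qq.degree < F.card := Lagrange.degree_interpolate_lt _ hinjOn
    by_cases hall : ∀ x : ↥X, w x 1 = 1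
    · have hFu : F = Finset.univ := by ext y; simp [hF, hall y]
      have hFcard : F.card ≤ N + 1 := by rw [hFu, Finset.card_univ, hcard]; omega
      have hqnd : qq.natDegree < N + 1 :=
        natDegree_lt_of_degree_lt (Nat.succ_pos N)
          (lt_of_lt_of_le hqdeg (Nat.cast_le.mpr hFcard))
      refine ⟨fun j => qq.coeff (j : ℕ), ?_⟩
      funext x
      rw [hΦfin qq x (hall x) hqnd]
      exact Lagrange.eval_interpolate_at_node g hinjOn (by rw [hFu]; exact Finset.mem_univ x)
    · push_neg at hall
      obtain ⟨xinf, hxinf⟩ := hall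
      obtain ⟨h0, h1⟩ : w xinf 0 = 1 ∧ w xinf 1 = 0 := (hw xinf).resolve_left hxinf
      have hFe : F = Finset.univ.erase xinf := by
        ext y
        simp only [hF, Finset.mem_filter, Finset.mem_univ, true_and, Finset.mem_erase, and_true]
        constructor
        · intro hy he
          rw [he, h1] at hy
          exact one_ne_zero hy.symm
        · intro hy
          rcases hw y with h | ⟨hy0, hy1⟩
          · exact h
          · exact absurd (hinf_uniq y xinf hy1 h1) hy
      have hFcard : F.card = s - 1 := by
        rw [hFe, Finset.card_erase_of_mem (Finset.mem_univ _), Finset.card_univ, hcard]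
      have hFle : F.card ≤ N := by omega
      set r : Polynomial K := (∏ x ∈ F, (Polynomial.X - Polynomial.C (w x 0)))
        * Polynomial.X ^ (N - F.card) with hr
      have hrm : r.Monic :=
        (Polynomial.monic_prod_of_monic _ _ fun x _ => Polynomial.monic_X_sub_C _).mul
          (Polynomial.monic_X_pow _)
      have hrdeg : r.natDegree = N := by
        rw [hr, Polynomial.Monic.natDegree_mul
          (Polynomial.monic_prod_of_monic _ _ fun x _ => Polynomial.monic_X_sub_C _)
          (Polynomial.monic_X_pow _), Polynomial.natDegree_prod_of_monic _ _
          (fun x _ => Polynomial.monic_X_sub_C _), Polynomial.natDegree_X_pow]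
        simp only [Polynomial.natDegree_X_sub_C, Finset.sum_const, smul_eq_mul, mul_one]
        omega
      set p : Polynomial K := qq + Polynomial.C (g xinf) * r with hpdef
      have hqnd : qq.natDegree ≤ N :=
        Polynomial.natDegree_le_iff_degree_le.mpr
          (le_trans (le_of_lt hqdeg) (Nat.cast_le.mpr hFle))
      have hpnd : p.natDegree < N + 1 := by
        rw [hpdef]
        have h2 := Polynomial.natDegree_add_le qq (Polynomial.C (g xinf) * r)
        have h3 := Polynomial.natDegree_C_mul_le (g xinf) r
        omega
      refine ⟨fun j => p.coeff (j : ℕ), ?_⟩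
      funext x
      by_cases hbx : w x 1 = 1
      · rw [hΦfin p x hbx hpnd]
        have hxF : x ∈ F := by simp [hF, hbx]
        rw [hpdef, Polynomial.eval_add, Polynomial.eval_mul, Polynomial.eval_C, hr,
          Polynomial.eval_mul, Polynomial.eval_prod]
        rw [Finset.prod_eq_zero hxF (by simp)]
        rw [zero_mul, mul_zero, add_zero, hqq]
        exact Lagrange.eval_interpolate_at_node g hinjOn hxF
      · have hxeq : x = xinf := by
          rcases hw x with h | ⟨hx0, hx1⟩
          · exact absurd h hbx
          · exact hinf_uniq x xinf hx1 h1
        rw [hΦinf _ x (hxeq ▸ h0) (hxeq ▸ h1), Fin.val_last]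
        rw [hpdef, Polynomial.coeff_add, Polynomial.coeff_C_mul]
        have hq0 : qq.coeff N = 0 :=
          Polynomial.coeff_eq_zero_of_degree_lt
            (lt_of_lt_of_le hqdeg (Nat.cast_le.mpr hFle))
        have hr1 : r.coeff N = 1 := by
          have := hrm.coeff_natDegree
          rwa [hrdeg] at this
        rw [hq0, hr1, mul_one, zero_add, hxeq]
  -- conclusion
  constructor
  · intro hcond
    have h1 : (d : ℤ) * (t : ℤ) ≤ (s : ℤ) - 2 := by
      rw [Int.fdiv_eq_ediv_of_nonneg _ (by positivity)] at hcond
      rw [mul_comm]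
      exact (Int.le_ediv_iff_mul_le (by exact_mod_cast hd)).mp hcond
    have hsN : N + 2 ≤ s := by
      have : (N : ℤ) = (d : ℤ) * t := by exact_mod_cast hN
      omega
    have hi := hinj (by omega)
    rw [hq, hrange, LinearMap.finrank_range_of_inj hi,
      Module.finrank_fintype_fun_eq_card, Fintype.card_fin]
  · intro hcond
    have h1 : (s : ℤ) - 2 < (d : ℤ) * (t : ℤ) := by
      rw [Int.fdiv_eq_ediv_of_nonneg _ (by positivity)] at hcond
      have h2 : ((s : ℤ) - 2) / d < t := by omega
      rw [mul_comm]
      exact (Int.ediv_lt_iff_lt_mul (by exact_mod_cast hd)).mp h2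
    have hsN : s ≤ N + 1 := by
      have : (N : ℤ) = (d : ℤ) * t := by exact_mod_cast hN
      omega
    have hsur := hsurj hsN
    rw [hq, hrange, LinearMap.range_eq_top.mpr hsur, finrank_top,
      Module.finrank_fintype_fun_eq_card, hcard]

end VeroneseCI
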